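/- arXiv:2510.09028 — 4 statements merged into one kernel-verified Lean document; each statement's English description precedes it below -/
import Mathlib

section
/- Let α ∈ (1/2,1), T > 0, h > 0, and let f : [0,T] → ℝ^d be bounded and measurable. Define X(t) = ∫_0^t K(t−s) f(s) ds for t ∈ [0,T]. Then for every t ∈ [0,T], ∫_0^t L(t−s) X(φ_h(s)) ds = ∫_0^t g^{(h)}(t,s) f(s) ds; that is, the resolvent applied to the time-discretized path equals the integral of f against the kernel g^{(h)}. -/
open MeasureTheory intervalIntegral Real

/-- Fractional kernel `K(u) = u^(α-1)/Γ(α)` for `u > 0`, `0` otherwise. -/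
noncomputable def Kker (α u : ℝ) : ℝ := if 0 < u then u ^ (α - 1) / Real.Gamma α else 0

/-- First-order resolvent kernel `L(u) = u^(-α)/Γ(1-α)` for `u > 0`, `0` otherwise. -/
noncomputable def Lker (α u : ℝ) : ℝ := if 0 < u then u ^ (-α) / Real.Gamma (1 - α) else 0

/-- Discretization map `φ_h(t) = h⌊t/h⌋`. -/
noncomputable def phi (h t : ℝ) : ℝ := h * (⌊t / h⌋ : ℝ)

/-- `χ_h(u) = u - φ_h(u)`. -/
noncomputable def chi (h u : ℝ) : ℝ := u - phi h u

/-- Discretized kernel `K^{(h)}`. -/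
noncomputable def Kh (α h t s : ℝ) : ℝ :=
  if 0 ≤ s ∧ s < phi h t then Kker α (phi h t - s) else 0

/-- The kernel `g^{(h)}(t,s) = ∫_s^t L(t-v) K^{(h)}(v,s) dv`. -/
noncomputable def gh (α h t s : ℝ) : ℝ := ∫ v in s..t, Lker α (t - v) * Kh α h v s

lemma phi_nonneg {h : ℝ} (hh : 0 < h) {s : ℝ} (hs : 0 ≤ s) : 0 ≤ phi h s := by
  have : (0:ℤ) ≤ ⌊s / h⌋ := Int.floor_nonneg.2 (div_nonneg hs hh.le)
  have : (0:ℝ) ≤ (⌊s / h⌋ : ℝ) := by exact_mod_cast this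
  exact mul_nonneg hh.le this

lemma phi_le {h : ℝ} (hh : 0 < h) (s : ℝ) : phi h s ≤ s := by
  have := Int.floor_le (s / h)
  calc h * (⌊s / h⌋ : ℝ) ≤ h * (s / h) := by nlinarith
    _ = s := by field_simp

lemma measurable_phi (h : ℝ) : Measurable (phi h) := by
  unfold phi
  exact measurable_const.mul
    ((measurable_from_top (f := (Int.cast : ℤ → ℝ))).comp ((measurable_id.div_const h).floor))

lemma measurable_Kker (α : ℝ) : Measurable (Kker α) := by
  have : Kker α = fun u => if 0 < u then Real.exp (Real.log u * (α - 1)) / Real.Gamma α else 0 := by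
    funext u; unfold Kker
    split
    · rw [Real.rpow_def_of_pos (by assumption)]
    · rfl
  rw [this]
  exact Measurable.ite measurableSet_Ioi
    ((Real.measurable_exp.comp (Real.measurable_log.mul_const _)).div_const _) measurable_const

lemma measurable_Lker (α : ℝ) : Measurable (Lker α) := by
  have : Lker α = fun u => if 0 < u then Real.exp (Real.log u * (-α)) / Real.Gamma (1 - α) else 0 := by
    funext u; unfold Lker
    split
    · rw [Real.rpow_def_of_pos (by assumption)]
    · rfl
  rw [this]
  exact Measurable.ite measurableSet_Ioi
    ((Real.measurable_exp.comp (Real.measurable_log.mul_const _)).div_const _) measurable_const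

lemma Kker_nonneg {α : ℝ} (hα : 0 < α) (x : ℝ) : 0 ≤ Kker α x := by
  unfold Kker
  split
  · exact div_nonneg (rpow_nonneg (by linarith) _) (Real.Gamma_pos_of_pos hα).le
  · exact le_refl 0

lemma Kker_eq_rpow {α : ℝ} (hα1 : α ≠ 1) {x : ℝ} (hx : 0 ≤ x) :
    Kker α x = x ^ (α - 1) / Real.Gamma α := by
  unfold Kker
  rcases lt_or_eq_of_le hx with hx' | hx'
  · rw [if_pos hx']
  · rw [if_neg (by rw [← hx']; exact lt_irrefl 0), ← hx',
      Real.zero_rpow (sub_ne_zero.2 hα1), zero_div]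

lemma Lker_eq_rpow {α : ℝ} (hα0 : α ≠ 0) {x : ℝ} (hx : 0 ≤ x) :
    Lker α x = x ^ (-α) / Real.Gamma (1 - α) := by
  unfold Lker
  rcases lt_or_eq_of_le hx with hx' | hx'
  · rw [if_pos hx']
  · rw [if_neg (by rw [← hx']; exact lt_irrefl 0), ← hx',
      Real.zero_rpow (neg_ne_zero.2 hα0), zero_div]

lemma Kker_eq_zero {α x : ℝ} (hx : x ≤ 0) : Kker α x = 0 := by
  unfold Kker; rw [if_neg (not_lt.2 hx)]

lemma Lker_eq_zero {α x : ℝ} (hx : x ≤ 0) : Lker α x = 0 := by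
  unfold Lker; rw [if_neg (not_lt.2 hx)]

lemma Kker_intervalIntegrable {α : ℝ} (hα0 : 0 < α) (hα1 : α ≠ 1) (a b : ℝ) :
    IntervalIntegrable (Kker α) volume a b := by
  have key : ∀ x : ℝ, IntervalIntegrable (Kker α) volume 0 x := by
    intro x
    rcases le_or_gt x 0 with hx | hx
    · rw [intervalIntegrable_iff]
      refine (integrableOn_zero).congr_fun (fun y hy => ?_) measurableSet_uIoc
      rw [Set.uIoc_of_ge hx] at hy
      exact (Kker_eq_zero hy.2).symm
    · rw [intervalIntegrable_iff_integrableOn_Ioc_of_le hx.le]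
      have hint : IntervalIntegrable (fun y : ℝ => y ^ (α - 1) / Real.Gamma α) volume 0 x :=
        (intervalIntegrable_rpow' (by linarith)).div_const _
      rw [intervalIntegrable_iff_integrableOn_Ioc_of_le hx.le] at hint
      exact hint.congr_fun (fun y hy => (Kker_eq_rpow hα1 hy.1.le).symm) measurableSet_Ioc
  exact (key a).symm.trans (key b)

lemma Lker_intervalIntegrable {α : ℝ} (hα0 : 0 < α) (hα1 : α < 1) (a b : ℝ) :
    IntervalIntegrable (Lker α) volume a b := by
  have key : ∀ x : ℝ, IntervalIntegrable (Lker α) volume 0 x := by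
    intro x
    rcases le_or_gt x 0 with hx | hx
    · rw [intervalIntegrable_iff]
      refine (integrableOn_zero).congr_fun (fun y hy => ?_) measurableSet_uIoc
      rw [Set.uIoc_of_ge hx] at hy
      exact (Lker_eq_zero hy.2).symm
    · rw [intervalIntegrable_iff_integrableOn_Ioc_of_le hx.le]
      have hint : IntervalIntegrable (fun y : ℝ => y ^ (-α) / Real.Gamma (1 - α)) volume 0 x :=
        (intervalIntegrable_rpow' (by linarith)).div_const _
      rw [intervalIntegrable_iff_integrableOn_Ioc_of_le hx.le] at hint
      exact hint.congr_fun (fun y hy => (Lker_eq_rpow hα0.ne' hy.1.le).symm) measurableSet_Ioc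
  exact (key a).symm.trans (key b)

lemma Kker_comp_integrableOn {α : ℝ} (hα0 : 0 < α) (hα1 : α ≠ 1) (c t : ℝ) :
    IntegrableOn (fun u => Kker α (c - u)) (Set.Ioc 0 t) := by
  rcases le_or_gt t 0 with ht | ht
  · rw [Set.Ioc_eq_empty (not_lt.2 ht)]; exact integrableOn_empty
  · rw [← intervalIntegrable_iff_integrableOn_Ioc_of_le ht.le]
    have := (Kker_intervalIntegrable hα0 hα1 c (c - t)).comp_sub_left c
    simpa using this

lemma Lker_comp_integrableOn {α : ℝ} (hα0 : 0 < α) (hα1 : α < 1) (c t : ℝ) :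
    IntegrableOn (fun u => Lker α (c - u)) (Set.Ioc 0 t) := by
  rcases le_or_gt t 0 with ht | ht
  · rw [Set.Ioc_eq_empty (not_lt.2 ht)]; exact integrableOn_empty
  · rw [← intervalIntegrable_iff_integrableOn_Ioc_of_le ht.le]
    have := (Lker_intervalIntegrable hα0 hα1 c (c - t)).comp_sub_left c
    simpa using this

lemma Kker_integral_eq {α : ℝ} (hα0 : 0 < α) (hα1 : α ≠ 1) {c t : ℝ}
    (hc : 0 ≤ c) (hct : c ≤ t) :
    ∫ u in Set.Ioc 0 t, Kker α (c - u) = c ^ α / α / Real.Gamma α := by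
  have h0t : (0:ℝ) ≤ t := le_trans hc hct
  rw [← intervalIntegral.integral_of_le h0t,
    intervalIntegral.integral_comp_sub_left (Kker α) c, sub_zero]
  have h1 : IntervalIntegrable (Kker α) volume (c - t) 0 := Kker_intervalIntegrable hα0 hα1 _ _
  have h2 : IntervalIntegrable (Kker α) volume 0 c := Kker_intervalIntegrable hα0 hα1 _ _
  rw [← intervalIntegral.integral_add_adjacent_intervals h1 h2]
  have e1 : (∫ x in (c - t)..(0:ℝ), Kker α x) = ∫ x in (c - t)..(0:ℝ), (0:ℝ) := by
    apply intervalIntegral.integral_congr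
    intro y hy
    rw [Set.uIcc_of_le (by linarith)] at hy
    exact Kker_eq_zero hy.2
  have e2 : (∫ x in (0:ℝ)..c, Kker α x) = ∫ x in (0:ℝ)..c, x ^ (α - 1) / Real.Gamma α := by
    apply intervalIntegral.integral_congr
    intro y hy
    rw [Set.uIcc_of_le hc] at hy
    exact Kker_eq_rpow hα1 hy.1
  rw [e1, e2]
  rw [intervalIntegral.integral_div, integral_rpow (Or.inl (by linarith))]
  rw [Real.zero_rpow (by linarith : α - 1 + 1 ≠ 0), sub_add_cancel]
  simp


lemma Kh_eq_Kker {α h s u : ℝ} (hu : 0 ≤ u) : Kh α h s u = Kker α (phi h s - u) := by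
  unfold Kh
  by_cases hc : 0 ≤ u ∧ u < phi h s
  · rw [if_pos hc]
  · rw [if_neg hc]
    have : ¬ u < phi h s := fun hlt => hc ⟨hu, hlt⟩
    exact (Kker_eq_zero (by linarith [not_lt.1 this])).symm

lemma Kh_eq_zero_of_le {α h s u : ℝ} (hh : 0 < h) (hsu : s ≤ u) : Kh α h s u = 0 := by
  unfold Kh
  rw [if_neg]
  rintro ⟨-, hlt⟩
  exact absurd (lt_of_le_of_lt hsu hlt) (not_lt.2 (phi_le hh s))

lemma measurable_Kh (α h : ℝ) : Measurable (fun p : ℝ × ℝ => Kh α h p.1 p.2) := by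
  unfold Kh
  apply Measurable.ite
  · exact (measurable_snd measurableSet_Ici).inter
      (measurableSet_lt measurable_snd ((measurable_phi h).comp measurable_fst))
  · exact (measurable_Kker α).comp
      (((measurable_phi h).comp measurable_fst).sub measurable_snd)
  · exact measurable_const

lemma measurable_Kh_right (α h s : ℝ) : Measurable (fun u => Kh α h s u) :=
  (measurable_Kh α h).comp (measurable_const.prodMk measurable_id)

/-- the resolvent applied to the time-discretized path equals the integral
of `f` against the kernel `g^{(h)}`. -/
theorem discretized_inversion (α : ℝ) (hα : α ∈ Set.Ioo (1/2 : ℝ) 1)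
    (T : ℝ) (hT : 0 < T) (h : ℝ) (hh : 0 < h) (d : ℕ)
    (f : ℝ → EuclideanSpace ℝ (Fin d)) (hf : Measurable f)
    (hbd : ∃ M : ℝ, ∀ s ∈ Set.Icc (0:ℝ) T, ‖f s‖ ≤ M)
    (X : ℝ → EuclideanSpace ℝ (Fin d))
    (hX : ∀ t ∈ Set.Icc (0:ℝ) T, X t = ∫ s in (0:ℝ)..t, Kker α (t - s) • f s)
    (t : ℝ) (ht : t ∈ Set.Icc (0:ℝ) T) :
    (∫ s in (0:ℝ)..t, Lker α (t - s) • X (phi h s)) =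
      ∫ s in (0:ℝ)..t, gh α h t s • f s := by
  obtain ⟨hα12, hα1⟩ := hα
  have hαpos : 0 < α := by linarith
  have hα1ne : α ≠ 1 := ne_of_lt hα1
  obtain ⟨ht0, htT⟩ := ht
  obtain ⟨M, hM⟩ := hbd
  have hM0 : 0 ≤ M := le_trans (norm_nonneg _) (hM 0 ⟨le_refl 0, hT.le⟩)
  have hΓK : 0 < Real.Gamma α := Real.Gamma_pos_of_pos hαpos
  set F : ℝ → ℝ → EuclideanSpace ℝ (Fin d) := fun s u => (Lker α (t - s) * Kh α h s u) • f u with hF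
  set μ := volume.restrict (Set.Ioc (0:ℝ) t) with hμ
  rw [intervalIntegral.integral_of_le ht0, intervalIntegral.integral_of_le ht0]
  -- Step B : rewrite LHS integrand
  have hXrep : ∀ s ∈ Set.Ioc (0:ℝ) t,
      Lker α (t - s) • X (phi h s) = ∫ u in Set.Ioc (0:ℝ) t, F s u := by
    intro s hs
    have hφ0 : 0 ≤ phi h s := phi_nonneg hh hs.1.le
    have hφs : phi h s ≤ s := phi_le hh s
    have hφt : phi h s ≤ t := le_trans hφs hs.2
    rw [hX _ ⟨hφ0, le_trans hφt htT⟩, intervalIntegral.integral_of_le hφ0]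
    have e1 : (∫ u in Set.Ioc (0:ℝ) t, Kh α h s u • f u)
        = ∫ u in Set.Ioc 0 (phi h s), Kker α (phi h s - u) • f u := by
      calc (∫ u in Set.Ioc (0:ℝ) t, Kh α h s u • f u)
          = ∫ u in Set.Ioc (0:ℝ) t,
              Set.indicator (Set.Ioc 0 (phi h s))
                (fun u => Kker α (phi h s - u) • f u) u := by
            apply setIntegral_congr_fun measurableSet_Ioc
            intro u hu
            show Kh α h s u • f u = Set.indicator (Set.Ioc 0 (phi h s))
              (fun u => Kker α (phi h s - u) • f u) u
            rcases le_or_gt u (phi h s) with huφ | huφ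
            · rw [Set.indicator_of_mem (Set.mem_Ioc.2 ⟨hu.1, huφ⟩), Kh_eq_Kker hu.1.le]
            · have hnot : u ∉ Set.Ioc 0 (phi h s) := fun hmem => (not_le.2 huφ) hmem.2
              rw [Set.indicator_of_notMem hnot,
                Kh_eq_Kker hu.1.le, Kker_eq_zero (by linarith), zero_smul]
        _ = ∫ u in Set.Ioc (0:ℝ) t ∩ Set.Ioc 0 (phi h s),
              Kker α (phi h s - u) • f u := setIntegral_indicator measurableSet_Ioc
        _ = ∫ u in Set.Ioc 0 (phi h s), Kker α (phi h s - u) • f u := by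
            rw [Set.inter_eq_self_of_subset_right (Set.Ioc_subset_Ioc_right hφt)]
    rw [← e1, ← MeasureTheory.integral_smul]
    apply setIntegral_congr_fun measurableSet_Ioc
    intro u _
    show Lker α (t - s) • (Kh α h s u • f u) = F s u
    rw [hF, smul_smul]
  rw [setIntegral_congr_fun measurableSet_Ioc hXrep]
  -- Step C : integrability on the product
  have hFmeas : AEStronglyMeasurable (fun p : ℝ × ℝ => F p.1 p.2) (μ.prod μ) := by
    apply Measurable.aestronglyMeasurable
    exact (((measurable_Lker α).comp (measurable_const.sub measurable_fst)).mul
      (measurable_Kh α h)).smul (hf.comp measurable_snd)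
  have hbound : ∀ s : ℝ, ∀ u ∈ Set.Ioc (0:ℝ) t,
      ‖F s u‖ ≤ (|Lker α (t - s)| * M) * Kker α (phi h s - u) := by
    intro s u hu
    have h1 : ‖f u‖ ≤ M := hM u ⟨hu.1.le, le_trans hu.2 htT⟩
    have h2 : 0 ≤ Kker α (phi h s - u) := Kker_nonneg hαpos _
    have h3 : (0:ℝ) ≤ |Lker α (t - s)| := abs_nonneg _
    calc ‖F s u‖ = (|Lker α (t - s)| * Kker α (phi h s - u)) * ‖f u‖ := by
          rw [hF, norm_smul, Real.norm_eq_abs, abs_mul, Kh_eq_Kker hu.1.le,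
            abs_of_nonneg h2]
      _ ≤ (|Lker α (t - s)| * Kker α (phi h s - u)) * M :=
          mul_le_mul_of_nonneg_left h1 (mul_nonneg h3 h2)
      _ = (|Lker α (t - s)| * M) * Kker α (phi h s - u) := by ring
  have hKint : ∀ s : ℝ, IntegrableOn (fun u => Kker α (phi h s - u)) (Set.Ioc 0 t) :=
    fun s => Kker_comp_integrableOn hαpos hα1ne _ t
  have hLint : IntegrableOn (fun s => Lker α (t - s)) (Set.Ioc 0 t) :=
    Lker_comp_integrableOn hαpos hα1 t t
  have key : Integrable (fun p : ℝ × ℝ => F p.1 p.2) (μ.prod μ) := by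
    rw [integrable_prod_iff hFmeas]
    constructor
    · refine Filter.Eventually.of_forall (fun s => ?_)
      refine Integrable.mono'
        (g := fun u => (|Lker α (t - s)| * M) * Kker α (phi h s - u))
        ((hKint s).const_mul _) ?_ ?_
      · apply Measurable.aestronglyMeasurable
        simp only [hF]
        exact (measurable_const.mul (measurable_Kh_right α h s)).smul hf
      · exact (ae_restrict_iff' measurableSet_Ioc).2
          (Filter.Eventually.of_forall (fun u hu => hbound s u hu))
    · refine Integrable.mono'
        (g := fun s => |Lker α (t - s)| * (M * (t ^ α / α / Real.Gamma α)))
        ((hLint.abs).mul_const _) (hFmeas.norm.integral_prod_right') ?_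
      refine (ae_restrict_iff' measurableSet_Ioc).2
        (Filter.Eventually.of_forall (fun s hs => ?_))
      have hφ0 : 0 ≤ phi h s := phi_nonneg hh hs.1.le
      have hφt : phi h s ≤ t := le_trans (phi_le hh s) hs.2
      have hint1 : (∫ u, ‖F s u‖ ∂μ)
          ≤ ∫ u in Set.Ioc (0:ℝ) t, (|Lker α (t - s)| * M) * Kker α (phi h s - u) := by
        refine integral_mono_of_nonneg
          (Filter.Eventually.of_forall (fun u => norm_nonneg _))
          ((hKint s).const_mul _) ?_
        exact (ae_restrict_iff' measurableSet_Ioc).2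
          (Filter.Eventually.of_forall (fun u hu => hbound s u hu))
      have hval : (∫ u in Set.Ioc (0:ℝ) t, (|Lker α (t - s)| * M) * Kker α (phi h s - u))
          = (|Lker α (t - s)| * M) * ((phi h s) ^ α / α / Real.Gamma α) := by
        rw [MeasureTheory.integral_const_mul, Kker_integral_eq hαpos hα1ne hφ0 hφt]
      have hφtα : (phi h s) ^ α ≤ t ^ α := Real.rpow_le_rpow hφ0 hφt hαpos.le
      have hstep : (phi h s) ^ α / α / Real.Gamma α ≤ t ^ α / α / Real.Gamma α := by
        gcongr
      have hfinal : (|Lker α (t - s)| * M) * ((phi h s) ^ α / α / Real.Gamma α)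
          ≤ |Lker α (t - s)| * (M * (t ^ α / α / Real.Gamma α)) := by
        calc (|Lker α (t - s)| * M) * ((phi h s) ^ α / α / Real.Gamma α)
            ≤ (|Lker α (t - s)| * M) * (t ^ α / α / Real.Gamma α) :=
              mul_le_mul_of_nonneg_left hstep (mul_nonneg (abs_nonneg _) hM0)
          _ = _ := by rw [mul_assoc]
      calc ‖∫ u, ‖F s u‖ ∂μ‖ = ∫ u, ‖F s u‖ ∂μ :=
            Real.norm_of_nonneg (integral_nonneg (fun u => norm_nonneg _))
        _ ≤ _ := hint1
        _ = _ := hval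
        _ ≤ _ := hfinal
  -- Step D : Fubini
  have swap := integral_integral_swap (f := F) (μ := μ) (ν := μ) key
  rw [swap]
  -- Step E : inner integral equals gh
  apply setIntegral_congr_fun measurableSet_Ioc
  intro u hu
  show (∫ s, F s u ∂μ) = gh α h t u • f u
  have e2 : (∫ s, F s u ∂μ) = (∫ s in Set.Ioc (0:ℝ) t, Lker α (t - s) * Kh α h s u) • f u := by
    simp only [hF, hμ]; rw [_root_.integral_smul_const]
  have e3 : (∫ s in Set.Ioc (0:ℝ) t, Lker α (t - s) * Kh α h s u) = gh α h t u := by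
    unfold gh
    rw [intervalIntegral.integral_of_le hu.2]
    calc (∫ s in Set.Ioc (0:ℝ) t, Lker α (t - s) * Kh α h s u)
        = ∫ s in Set.Ioc (0:ℝ) t,
            Set.indicator (Set.Ioc u t) (fun s => Lker α (t - s) * Kh α h s u) s := by
          apply setIntegral_congr_fun measurableSet_Ioc
          intro s hs
          show Lker α (t - s) * Kh α h s u = Set.indicator (Set.Ioc u t)
            (fun s => Lker α (t - s) * Kh α h s u) s
          rcases lt_or_ge u s with hus | hus
          · rw [Set.indicator_of_mem (Set.mem_Ioc.2 ⟨hus, hs.2⟩)]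
          · have hnot : s ∉ Set.Ioc u t := fun hmem => (not_lt.2 hus) hmem.1
            rw [Set.indicator_of_notMem hnot, Kh_eq_zero_of_le hh hus, mul_zero]
      _ = ∫ s in Set.Ioc (0:ℝ) t ∩ Set.Ioc u t, Lker α (t - s) * Kh α h s u :=
          setIntegral_indicator measurableSet_Ioc
      _ = ∫ s in Set.Ioc u t, Lker α (t - s) * Kh α h s u := by
          rw [Set.inter_eq_self_of_subset_right (Set.Ioc_subset_Ioc_left hu.1.le)]
  rw [e2, e3]
end

section
/- Let α ∈ (1/2,1) and T > 0. There exists a constant C > 0 (depending only on α and T) such that for all 0 ≤ u < t ≤ T and all 0 < h ≤ 1, the quantity e₁^{(h)}(t,u) satisfies e₁^{(h)}(t,u) ≤ C·min((h/(t−u))^α, 1). -/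
open MeasureTheory intervalIntegral Real

/-- `e₁^{(h)}(t,u)` from the proof of Proposition 3.3. -/
noncomputable def e1 (α h t u : ℝ) : ℝ :=
  (t - u) ^ (1 - α) *
    ∫ ξ in (0:ℝ)..(min ((h - chi h u) / (t - u)) 1),
      (1 - ξ) ^ (-α) * |Kh α h (ξ * (t - u) + u) u - Kker α (ξ * (t - u))|

/-- `e₂^{(h)}(t,u)` from the proof of Proposition 3.3. -/
noncomputable def e2 (α h t u : ℝ) : ℝ :=
  (t - u) ^ (1 - α) *
    ∫ ξ in (min ((h - chi h u) / (t - u)) 1)..(min ((3 * h - chi h u) / (t - u)) 1),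
      (1 - ξ) ^ (-α) * |Kh α h (ξ * (t - u) + u) u - Kker α (ξ * (t - u))|

/-- `e₃^{(h)}(t,u)` from the proof of Proposition 3.3. -/
noncomputable def e3 (α h t u : ℝ) : ℝ :=
  (t - u) ^ (1 - α) *
    ∫ ξ in (min ((3 * h - chi h u) / (t - u)) 1)..(1:ℝ),
      (1 - ξ) ^ (-α) * |Kh α h (ξ * (t - u) + u) u - Kker α (ξ * (t - u))|

/-- Pointwise bound for the beta integrand. -/
lemma aux_g_le_G {α x : ℝ} (hα0 : 0 < α) (hα1 : α < 1) (hx0 : 0 ≤ x) (hx1 : x ≤ 1) :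
    x ^ (α - 1) * (1 - x) ^ (-α) ≤ 2 * (x ^ (α - 1) + (1 - x) ^ (-α)) := by
  have h1 : (0:ℝ) ≤ x ^ (α - 1) := Real.rpow_nonneg hx0 _
  have h2 : (0:ℝ) ≤ (1 - x) ^ (-α) := Real.rpow_nonneg (by linarith) _
  rcases le_or_gt x (1/2) with hx | hx
  · have hbx : (0:ℝ) < 1 - x := by linarith
    have hb : (1 - x) ^ (-α) ≤ 2 := by
      calc (1 - x) ^ (-α) ≤ (1 - x) ^ (-1 : ℝ) :=
            Real.rpow_le_rpow_of_exponent_ge hbx (by linarith) (by linarith)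
        _ = (1 - x)⁻¹ := by rw [Real.rpow_neg_one]
        _ ≤ 2 := by
            rw [inv_le_comm₀ hbx (by norm_num)]
            linarith
    nlinarith
  · have hb : x ^ (α - 1) ≤ 2 := by
      calc x ^ (α - 1) ≤ x ^ (-1 : ℝ) :=
            Real.rpow_le_rpow_of_exponent_ge (by linarith) hx1 (by linarith)
        _ = x⁻¹ := by rw [Real.rpow_neg_one]
        _ ≤ 2 := by
            rw [inv_le_comm₀ (by linarith) (by norm_num)]
            linarith
    nlinarith

set_option maxHeartbeats 1000000 in
/-- bound on `e₁^{(h)}`. -/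
theorem e1_bound (α T : ℝ) (hα : α ∈ Set.Ioo (1/2 : ℝ) 1) (hT : 0 < T) :
    ∃ C > 0, ∀ u t h : ℝ, 0 ≤ u → u < t → t ≤ T → 0 < h → h ≤ 1 →
      e1 α h t u ≤ C * min ((h / (t - u)) ^ α) 1 := by
  obtain ⟨hα1, hα2⟩ := hα
  have hα0 : 0 < α := by linarith
  have h1α : (0:ℝ) < 1 - α := by linarith
  have hΓ : 0 < Real.Gamma α := Real.Gamma_pos_of_pos hα0
  set B : ℝ := 2 * (1/α + 1/(1-α)) with hBdef
  have hBpos : 0 < B := by positivity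
  refine ⟨B / Real.Gamma α, by positivity, ?_⟩
  intro u t h hu hut htT hh hh1
  have hd : 0 < t - u := by linarith
  have hfl : phi h u ≤ u := by
    have h1 : ((⌊u/h⌋ : ℤ) : ℝ) ≤ u / h := Int.floor_le (u / h)
    have := mul_le_mul_of_nonneg_left h1 hh.le
    unfold phi
    calc h * (⌊u/h⌋:ℝ) ≤ h * (u/h) := this
      _ = u := by field_simp
  have hfl2 : u < phi h u + h := by
    have h1 : u / h < (⌊u/h⌋:ℝ) + 1 := Int.lt_floor_add_one (u / h)
    have h2 := mul_lt_mul_of_pos_left h1 hh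
    unfold phi
    have h3 : h * (u / h) = u := by field_simp
    nlinarith
  have hχ0 : 0 ≤ chi h u := by unfold chi; linarith
  have hχh : chi h u < h := by unfold chi; linarith
  set m := min ((h - chi h u) / (t - u)) 1 with hmdef
  have hm0 : 0 < m := lt_min (div_pos (by linarith) hd) one_pos
  have hm1 : m ≤ 1 := min_le_right _ _
  have hmle : m ≤ h / (t - u) := by
    refine le_trans (min_le_left _ _) ?_
    gcongr
    linarith
  -- Kh vanishes on (0, m)
  have hKh0 : ∀ x ∈ Set.Ioo (0:ℝ) m, Kh α h (x * (t - u) + u) u = 0 := by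
    intro x hx
    have hxm : x < (h - chi h u) / (t - u) := lt_of_lt_of_le hx.2 (min_le_left _ _)
    have hxd : x * (t - u) < h - chi h u := by
      calc x * (t - u) < ((h - chi h u) / (t - u)) * (t - u) := by
            exact mul_lt_mul_of_pos_right hxm hd
        _ = h - chi h u := div_mul_cancel₀ _ hd.ne'
    have hv1 : u ≤ x * (t - u) + u := by nlinarith [hx.1.le]
    have hv2 : x * (t - u) + u < phi h u + h := by
      unfold chi at hxd; linarith
    have hfloor : ⌊(x * (t - u) + u) / h⌋ = ⌊u / h⌋ := by
      rw [Int.floor_eq_iff]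
      constructor
      · calc ((⌊u/h⌋:ℤ):ℝ) ≤ u / h := Int.floor_le _
          _ ≤ (x * (t - u) + u) / h := by gcongr
      · rw [div_lt_iff₀ hh]
        unfold phi at hv2
        push_cast
        nlinarith
    have hphiv : phi h (x * (t - u) + u) = phi h u := by
      unfold phi; rw [hfloor]
    unfold Kh
    rw [if_neg]
    rintro ⟨-, hlt⟩
    rw [hphiv] at hlt
    exact absurd hlt (not_lt.mpr hfl)
  -- congruence of integrands
  have hm' : ∀ᵐ x : ℝ, x ≠ m := by
    have h0 : (volume : Measure ℝ) {m} = 0 := measure_singleton m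
    exact MeasureTheory.ae_iff.mpr (by simpa using h0)
  have hcong : (∫ x in (0:ℝ)..m,
        (1 - x) ^ (-α) * |Kh α h (x * (t - u) + u) u - Kker α (x * (t - u))|)
      = ∫ x in (0:ℝ)..m, ((t-u) ^ (α-1) / Real.Gamma α) * (x ^ (α-1) * (1-x) ^ (-α)) := by
    apply intervalIntegral.integral_congr_ae
    filter_upwards [hm'] with x hxm hxI
    rw [Set.uIoc_of_le hm0.le] at hxI
    have hxo : x ∈ Set.Ioo (0:ℝ) m := ⟨hxI.1, lt_of_le_of_ne hxI.2 hxm⟩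
    rw [hKh0 x hxo]
    have hxd : 0 < x * (t - u) := mul_pos hxo.1 hd
    rw [Kker, if_pos hxd, zero_sub, abs_neg, abs_of_nonneg (by positivity),
      Real.mul_rpow hxo.1.le hd.le]
    ring
  -- integrability
  have hi1 : IntervalIntegrable (fun x : ℝ => x ^ (α-1)) volume 0 m :=
    intervalIntegrable_rpow' (by linarith)
  have hi2 : IntervalIntegrable (fun x : ℝ => (1 - x) ^ (-α)) volume 0 m := by
    have := (intervalIntegrable_rpow' (show (-1:ℝ) < -α by linarith)
      (a := (1:ℝ)) (b := 1 - m)).comp_sub_left 1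
    simpa using this
  have hGint : IntervalIntegrable (fun x : ℝ => 2*(x^(α-1) + (1-x)^(-α))) volume 0 m :=
    (hi1.add hi2).const_mul 2
  have hgmeas : Measurable (fun x : ℝ => x^(α-1) * (1-x)^(-α)) := by
    fun_prop
  have hgint : IntervalIntegrable (fun x : ℝ => x^(α-1)*(1-x)^(-α)) volume 0 m := by
    apply hGint.mono_fun' hgmeas.aestronglyMeasurable
    filter_upwards [ae_restrict_mem measurableSet_uIoc] with x hx
    rw [Set.uIoc_of_le hm0.le] at hx
    have hx0 : (0:ℝ) ≤ x := hx.1.le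
    have hx1 : x ≤ 1 := le_trans hx.2 hm1
    have := aux_g_le_G hα0 hα2 hx0 hx1
    have hnn : (0:ℝ) ≤ x^(α-1)*(1-x)^(-α) :=
      mul_nonneg (Real.rpow_nonneg hx0 _) (Real.rpow_nonneg (by linarith) _)
    simp only [Real.norm_eq_abs, abs_of_nonneg hnn]
    exact this
  have hmono : (∫ x in (0:ℝ)..m, x^(α-1)*(1-x)^(-α))
      ≤ ∫ x in (0:ℝ)..m, 2*(x^(α-1)+(1-x)^(-α)) :=
    intervalIntegral.integral_mono_on hm0.le hgint hGint
      (fun x hx => aux_g_le_G hα0 hα2 hx.1 (le_trans hx.2 hm1))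
  -- value of the dominating integral
  have hGval : (∫ x in (0:ℝ)..m, 2*(x^(α-1)+(1-x)^(-α)))
      = 2*((m^α/α) + (1 - (1-m)^(1-α))/(1-α)) := by
    rw [intervalIntegral.integral_const_mul, intervalIntegral.integral_add hi1 hi2]
    have hA : (∫ x in (0:ℝ)..m, x^(α-1)) = m^α/α := by
      rw [integral_rpow (Or.inl (by linarith : (-1:ℝ) < α - 1))]
      have he : α - 1 + 1 = α := by ring
      rw [he, Real.zero_rpow hα0.ne']
      ring
    have hB2 : (∫ x in (0:ℝ)..m, (1-x)^(-α)) = (1 - (1-m)^(1-α))/(1-α) := by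
      have h2 : (∫ x in (0:ℝ)..m, (1-x)^(-α)) = ∫ x in (1-m)..(1:ℝ), x^(-α) := by
        simpa using intervalIntegral.integral_comp_sub_left
          (a := (0:ℝ)) (b := m) (fun x => x^(-α)) 1
      rw [h2, integral_rpow (Or.inl (by linarith : (-1:ℝ) < -α))]
      have he : -α + 1 = 1 - α := by ring
      rw [he, Real.one_rpow]
    rw [hA, hB2]
  -- bound the value
  have hkey1 : 1 - (1-m)^(1-α) ≤ m^α := by
    have h1 : 1 - m ≤ (1-m)^(1-α) := by
      rcases eq_or_lt_of_le hm1 with he | hlt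
      · rw [← he]
        simp [Real.rpow_nonneg]
      · have h0 : (0:ℝ) < 1 - m := by linarith
        calc 1 - m = (1-m)^(1:ℝ) := (Real.rpow_one _).symm
          _ ≤ (1-m)^(1-α) := Real.rpow_le_rpow_of_exponent_ge h0 (by linarith) (by linarith)
    have h2 : m ≤ m^α := by
      calc m = m^(1:ℝ) := (Real.rpow_one _).symm
        _ ≤ m^α := Real.rpow_le_rpow_of_exponent_ge hm0 hm1 (by linarith)
    linarith
  have hmα : (0:ℝ) ≤ m^α := Real.rpow_nonneg hm0.le _
  have hGbound : 2*((m^α/α) + (1 - (1-m)^(1-α))/(1-α)) ≤ B * m^α := by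
    have hdiv : (1 - (1-m)^(1-α))/(1-α) ≤ m^α/(1-α) := by gcongr
    have heq : B * m^α = 2*(m^α/α + m^α/(1-α)) := by rw [hBdef]; ring
    linarith
  have hmin : m ^ α ≤ min ((h/(t-u))^α) 1 := by
    refine le_min ?_ (Real.rpow_le_one hm0.le hm1 hα0.le)
    exact Real.rpow_le_rpow hm0.le hmle hα0.le
  -- assemble
  have he1 : e1 α h t u = (1/Real.Gamma α) * ∫ x in (0:ℝ)..m, x^(α-1)*(1-x)^(-α) := by
    unfold e1
    rw [← hmdef, hcong, intervalIntegral.integral_const_mul, ← mul_assoc]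
    congr 1
    have hpow : (t-u)^(1-α) * (t-u)^(α-1) = 1 := by
      rw [← Real.rpow_add hd]
      norm_num
    field_simp
    nlinarith [hpow]
  rw [he1]
  calc (1/Real.Gamma α) * ∫ x in (0:ℝ)..m, x^(α-1)*(1-x)^(-α)
      ≤ (1/Real.Gamma α) * (B * m^α) := by
        apply mul_le_mul_of_nonneg_left _ (by positivity)
        calc (∫ x in (0:ℝ)..m, x^(α-1)*(1-x)^(-α))
            ≤ ∫ x in (0:ℝ)..m, 2*(x^(α-1)+(1-x)^(-α)) := hmono
          _ = 2*((m^α/α) + (1 - (1-m)^(1-α))/(1-α)) := hGval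
          _ ≤ B * m^α := hGbound
    _ = (B / Real.Gamma α) * m^α := by ring
    _ ≤ (B / Real.Gamma α) * min ((h/(t-u))^α) 1 :=
        mul_le_mul_of_nonneg_left hmin (by positivity)
end

section
/- Let α ∈ (1/2,1) and T > 0. There exists a constant C > 0 (depending only on α and T) such that for all 0 ≤ u < t ≤ T and all 0 < h ≤ 1, the quantity e₃^{(h)}(t,u) satisfies e₃^{(h)}(t,u) ≤ C·min((h/(t−u))^α, 1). -/
open MeasureTheory intervalIntegral Real

/- ### Auxiliary lemmas -/

lemma chi_nonneg' {h u : ℝ} (hh : 0 < h) : 0 ≤ chi h u := by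
  have h1 : h * (⌊u / h⌋ : ℝ) ≤ h * (u / h) :=
    mul_le_mul_of_nonneg_left (Int.floor_le _) hh.le
  have h2 : h * (u / h) = u := by field_simp
  simp only [chi, phi, sub_nonneg]
  linarith

lemma chi_lt' {h u : ℝ} (hh : 0 < h) : chi h u < h := by
  have h1 : u / h < (⌊u / h⌋ : ℝ) + 1 := Int.lt_floor_add_one _
  have h2 : u < h * ((⌊u / h⌋ : ℝ) + 1) := by
    calc u = h * (u / h) := by field_simp
    _ < h * ((⌊u / h⌋ : ℝ) + 1) := mul_lt_mul_of_pos_left h1 hh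
  simp only [chi, phi]
  nlinarith

lemma measurable_rpow_const' (c : ℝ) : Measurable fun x : ℝ => x ^ c := by
  have heq : (fun x : ℝ => x ^ c) = fun x =>
      if x = 0 then (if c = 0 then 1 else 0)
      else Real.exp (Real.log x * c) * (if x < 0 then Real.cos (c * π) else 1) := by
    funext x
    rcases lt_trichotomy x 0 with hx | hx | hx
    · rw [Real.rpow_def_of_neg hx, if_neg hx.ne, if_pos hx]
    · subst hx
      by_cases hc : c = 0 <;> simp [hc, Real.zero_rpow]
    · rw [Real.rpow_def_of_pos hx, if_neg hx.ne', if_neg (not_lt.2 hx.le), mul_one]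
  rw [heq]
  refine Measurable.ite (MeasurableSet.singleton 0) measurable_const ?_
  exact ((Real.measurable_exp.comp (Real.measurable_log.mul_const c)).mul
    (Measurable.ite measurableSet_Iio measurable_const measurable_const))

lemma measurable_Kh_aux (α h u r : ℝ) : Measurable fun ξ : ℝ => Kh α h (ξ * r + u) u := by
  have hphi : Measurable fun ξ : ℝ => phi h (ξ * r + u) := by
    unfold phi
    exact measurable_const.mul
      (measurable_from_top.comp (((measurable_id.mul_const r).add_const u).div_const h).floor)
  unfold Kh
  refine Measurable.ite ?_ ((measurable_Kker α).comp (hphi.sub_const u)) measurable_const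
  have : {ξ : ℝ | 0 ≤ u ∧ u < phi h (ξ * r + u)} =
      {ξ : ℝ | 0 ≤ u} ∩ {ξ : ℝ | u < phi h (ξ * r + u)} := rfl
  rw [this]
  exact (MeasurableSet.const _).inter (measurableSet_lt measurable_const hphi)

/-- Pointwise bound on the kernel difference far from the discontinuity. -/
lemma kdiff_bound {α h u s : ℝ} (hα : α ∈ Set.Ioo (1/2 : ℝ) 1) (hu : 0 ≤ u) (hh : 0 < h)
    (hs : 3 * h - chi h u ≤ s - u) :
    |Kh α h s u - Kker α (s - u)| ≤ 4 * (1 - α) / Real.Gamma α * (h * (s - u) ^ (α - 2)) := by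
  obtain ⟨hα1, hα2⟩ := hα
  have hΓ : 0 < Real.Gamma α := Real.Gamma_pos_of_pos (by linarith)
  set w := s - u with hw
  set δ := chi h s with hδ
  have hδ0 : 0 ≤ δ := chi_nonneg' hh
  have hδh : δ < h := chi_lt' hh
  have hχu0 : 0 ≤ chi h u := chi_nonneg' hh
  have hχuh : chi h u < h := chi_lt' hh
  have hw2h : 2 * h < w := by linarith
  have hw0 : 0 < w := by linarith
  have hwd0 : 0 < w - δ := by linarith
  have hphis : phi h s = s - δ := by simp [hδ, chi]
  have hcond : u < phi h s := by rw [hphis]; linarith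
  have hKh : Kh α h s u = (w - δ) ^ (α - 1) / Real.Gamma α := by
    rw [Kh, if_pos ⟨hu, hcond⟩, hphis, show s - δ - u = w - δ by rw [hw]; ring,
      Kker, if_pos hwd0]
  have hKk : Kker α w = w ^ (α - 1) / Real.Gamma α := by rw [Kker, if_pos hw0]
  -- mean value estimate
  have key : |(w - δ) ^ (α - 1) - w ^ (α - 1)| ≤ (1 - α) * (w - δ) ^ (α - 2) * δ := by
    have hconv : Convex ℝ (Set.Icc (w - δ) w) := convex_Icc _ _
    have hder : ∀ x ∈ Set.Icc (w - δ) w, HasDerivWithinAt (fun y : ℝ => y ^ (α - 1))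
        ((fun y : ℝ => (α - 1) * y ^ (α - 1 - 1)) x) (Set.Icc (w - δ) w) x := by
      intro x hx
      exact (Real.hasDerivAt_rpow_const
        (Or.inl (ne_of_gt (lt_of_lt_of_le hwd0 hx.1)))).hasDerivWithinAt
    have hbound : ∀ x ∈ Set.Icc (w - δ) w,
        ‖(fun y : ℝ => (α - 1) * y ^ (α - 1 - 1)) x‖ ≤ (1 - α) * (w - δ) ^ (α - 2) := by
      intro x hx
      have hx0 : 0 < x := lt_of_lt_of_le hwd0 hx.1
      have hmono : x ^ (α - 1 - 1) ≤ (w - δ) ^ (α - 1 - 1) :=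
        Real.rpow_le_rpow_of_nonpos hwd0 hx.1 (by linarith)
      have he : α - 1 - 1 = α - 2 := by ring
      rw [he] at hmono
      simp only [norm_mul, Real.norm_eq_abs, he]
      rw [abs_of_nonpos (by linarith : α - 1 ≤ 0), abs_of_nonneg (Real.rpow_nonneg hx0.le _)]
      nlinarith [Real.rpow_nonneg hx0.le (α - 2)]
    have hmvt := hconv.norm_image_sub_le_of_norm_hasDerivWithin_le hder hbound
      (Set.right_mem_Icc.2 (by linarith)) (Set.left_mem_Icc.2 (by linarith))
    rw [Real.norm_eq_abs, Real.norm_eq_abs] at hmvt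
    have : |w - δ - w| = δ := by rw [abs_of_nonpos (by linarith)]; ring
    rw [this] at hmvt
    linarith [hmvt]
  have hwd2 : (w - δ) ^ (α - 2) ≤ 4 * w ^ (α - 2) := by
    have h1 : w / 2 ≤ w - δ := by linarith
    have h2 : (w - δ) ^ (α - 2) ≤ (w / 2) ^ (α - 2) :=
      Real.rpow_le_rpow_of_nonpos (by linarith) h1 (by linarith)
    have h3 : (w / 2) ^ (α - 2) = w ^ (α - 2) / 2 ^ (α - 2) :=
      Real.div_rpow hw0.le (by norm_num : (0:ℝ) ≤ 2) (α - 2)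
    have h4 : w ^ (α - 2) / 2 ^ (α - 2) = w ^ (α - 2) * 2 ^ (2 - α) := by
      rw [div_eq_mul_inv, ← Real.rpow_neg (by norm_num : (0:ℝ) ≤ 2),
        show -(α - 2) = 2 - α by ring]
    have h5 : (2:ℝ) ^ (2 - α) ≤ 4 := by
      calc (2:ℝ) ^ (2 - α) ≤ 2 ^ (2:ℝ) :=
            Real.rpow_le_rpow_of_exponent_le one_le_two (by linarith)
        _ = 4 := by
            rw [show (2:ℝ) = ((2:ℕ):ℝ) from by norm_num, Real.rpow_natCast]; norm_num
    have h6 : 0 ≤ w ^ (α - 2) := Real.rpow_nonneg hw0.le _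
    nlinarith
  rw [hKh, hKk, div_sub_div_same, abs_div, abs_of_pos hΓ,
    show 4 * (1 - α) / Real.Gamma α * (h * w ^ (α - 2))
      = 4 * (1 - α) * (h * w ^ (α - 2)) / Real.Gamma α by ring]
  refine div_le_div_of_nonneg_right ?_ hΓ.le
  have c1 : (1 - α) * (w - δ) ^ (α - 2) * δ ≤ (1 - α) * (4 * w ^ (α - 2)) * h := by
    apply mul_le_mul ?_ hδh.le hδ0 ?_
    · exact mul_le_mul_of_nonneg_left hwd2 (by linarith)
    · have := Real.rpow_nonneg hw0.le (α - 2); nlinarith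
  nlinarith [key, c1]

set_option maxHeartbeats 1000000 in
/-- bound on `e₃^{(h)}`. -/
theorem e3_bound (α T : ℝ) (hα : α ∈ Set.Ioo (1/2 : ℝ) 1) (hT : 0 < T) :
    ∃ C > 0, ∀ u t h : ℝ, 0 ≤ u → u < t → t ≤ T → 0 < h → h ≤ 1 →
      e3 α h t u ≤ C * min ((h / (t - u)) ^ α) 1 := by
  obtain ⟨hα1, hα2⟩ := hα
  have hΓ : 0 < Real.Gamma α := Real.Gamma_pos_of_pos (by linarith)
  refine ⟨32 / Real.Gamma α + 1, by positivity, ?_⟩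
  intro u t h hu hut htT hh hh1
  have hr0 : 0 < t - u := by linarith
  simp only [e3]
  set r := t - u with hr
  have hχ0 : 0 ≤ chi h u := chi_nonneg' hh
  have hχh : chi h u < h := chi_lt' hh
  by_cases hcase : (3 * h - chi h u) / r < 1
  case neg =>
    rw [min_eq_right (not_lt.1 hcase), intervalIntegral.integral_same, mul_zero]
    positivity
  case pos =>
    set a := (3 * h - chi h u) / r with ha
    rw [min_eq_left hcase.le]
    have ha0 : 0 < a := div_pos (by linarith) hr0
    have h2h : 2 * h < r := by
      have := (div_lt_one hr0).1 hcase
      linarith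
    have hhr0 : 0 < h / r := div_pos hh hr0
    have hhr : h / r < 1 := by rw [div_lt_one hr0]; linarith
    set C1 := 4 * (1 - α) / Real.Gamma α with hC1
    have hC1pos : 0 ≤ C1 := by
      apply div_nonneg ?_ hΓ.le; linarith
    set G : ℝ → ℝ := fun ξ => 4 * C1 * h * r ^ (α - 2) * ((1 - ξ) ^ (-α) + ξ ^ (α - 2))
      with hG
    have hrα2 : 0 ≤ r ^ (α - 2) := Real.rpow_nonneg hr0.le _
    -- pointwise bound
    have hptw : ∀ ξ ∈ Set.Icc a 1,
        (1 - ξ) ^ (-α) * |Kh α h (ξ * r + u) u - Kker α (ξ * r)| ≤ G ξ := by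
      intro ξ hξ
      obtain ⟨hξa, hξ1⟩ := hξ
      have hξ0 : 0 < ξ := lt_of_lt_of_le ha0 hξa
      have har : a * r = 3 * h - chi h u := div_mul_cancel₀ _ hr0.ne'
      have hsu : 3 * h - chi h u ≤ (ξ * r + u) - u := by
        have : a * r ≤ ξ * r := mul_le_mul_of_nonneg_right hξa hr0.le
        rw [har] at this; linarith
      have hkd := kdiff_bound ⟨hα1, hα2⟩ hu hh hsu
      have hsu' : ξ * r + u - u = ξ * r := by ring
      rw [hsu'] at hkd
      have h1ξ : 0 ≤ 1 - ξ := by linarith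
      have hA : 0 ≤ (1 - ξ) ^ (-α) := Real.rpow_nonneg h1ξ _
      have hmr : (ξ * r) ^ (α - 2) = ξ ^ (α - 2) * r ^ (α - 2) :=
        Real.mul_rpow hξ0.le hr0.le
      have hstep1 : (1 - ξ) ^ (-α) * |Kh α h (ξ * r + u) u - Kker α (ξ * r)|
          ≤ (1 - ξ) ^ (-α) * (C1 * (h * (ξ ^ (α - 2) * r ^ (α - 2)))) := by
        apply mul_le_mul_of_nonneg_left ?_ hA
        rw [← hmr]; exact hkd
      refine hstep1.trans ?_
      -- now the product bound (1-ξ)^(-α) * ξ^(α-2) ≤ 4 * ((1-ξ)^(-α) + ξ^(α-2))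
      have hξα : 0 ≤ ξ ^ (α - 2) := Real.rpow_nonneg hξ0.le _
      have h24 : (2:ℝ) ^ (2:ℝ) = 4 := by
        rw [show (2:ℝ) = ((2:ℕ):ℝ) from by norm_num, Real.rpow_natCast]; norm_num
      have hprod : (1 - ξ) ^ (-α) * ξ ^ (α - 2) ≤ 4 * ((1 - ξ) ^ (-α) + ξ ^ (α - 2)) := by
        by_cases hhalf : ξ ≤ 1 / 2
        · have hb : (1 - ξ) ^ (-α) ≤ (1/2 : ℝ) ^ (-α) :=
            Real.rpow_le_rpow_of_nonpos (by norm_num) (by linarith) (by linarith)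
          have hb2 : ((1:ℝ)/2) ^ (-α) = 2 ^ α := by
            rw [show (1:ℝ)/2 = 2⁻¹ by norm_num,
              Real.inv_rpow (by norm_num : (0:ℝ) ≤ 2),
              ← Real.rpow_neg (by norm_num : (0:ℝ) ≤ 2), show -(-α) = α by ring]
          have hb3 : (2:ℝ) ^ α ≤ 4 := by
            calc (2:ℝ) ^ α ≤ 2 ^ (2:ℝ) :=
                  Real.rpow_le_rpow_of_exponent_le one_le_two (by linarith)
              _ = 4 := h24
          nlinarith
        · have hb : ξ ^ (α - 2) ≤ (1/2 : ℝ) ^ (α - 2) :=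
            Real.rpow_le_rpow_of_nonpos (by norm_num) (by linarith) (by linarith)
          have hb2 : ((1:ℝ)/2) ^ (α - 2) = 2 ^ (2 - α) := by
            rw [show (1:ℝ)/2 = 2⁻¹ by norm_num,
              Real.inv_rpow (by norm_num : (0:ℝ) ≤ 2),
              ← Real.rpow_neg (by norm_num : (0:ℝ) ≤ 2), show -(α-2) = 2 - α by ring]
          have hb3 : (2:ℝ) ^ (2 - α) ≤ 4 := by
            calc (2:ℝ) ^ (2 - α) ≤ 2 ^ (2:ℝ) :=
                  Real.rpow_le_rpow_of_exponent_le one_le_two (by linarith)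
              _ = 4 := h24
          nlinarith
      have hcoef : 0 ≤ C1 * h := by positivity
      calc (1 - ξ) ^ (-α) * (C1 * (h * (ξ ^ (α - 2) * r ^ (α - 2))))
          = (C1 * h * r ^ (α - 2)) * ((1 - ξ) ^ (-α) * ξ ^ (α - 2)) := by ring
        _ ≤ (C1 * h * r ^ (α - 2)) * (4 * ((1 - ξ) ^ (-α) + ξ ^ (α - 2))) := by
            apply mul_le_mul_of_nonneg_left hprod (by positivity)
        _ = G ξ := by rw [hG]; ring
    -- integrability
    have hint1 : IntervalIntegrable (fun ξ : ℝ => (1 - ξ) ^ (-α)) volume a 1 := by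
      have base : IntervalIntegrable (fun x : ℝ => x ^ (-α)) volume 0 (1 - a) :=
        intervalIntegral.intervalIntegrable_rpow' (by linarith)
      have h2 := (base.comp_sub_left 1).symm
      norm_num at h2
      exact h2
    have hint2 : IntervalIntegrable (fun ξ : ℝ => ξ ^ (α - 2)) volume a 1 :=
      intervalIntegral.intervalIntegrable_rpow
        (Or.inr (Set.notMem_uIcc_of_lt ha0 one_pos))
    have hG_int : IntervalIntegrable G volume a 1 := (hint1.add hint2).const_mul _
    have hf_meas : Measurable fun ξ : ℝ =>
        (1 - ξ) ^ (-α) * |Kh α h (ξ * r + u) u - Kker α (ξ * r)| := by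
      apply Measurable.mul
      · exact (measurable_rpow_const' (-α)).comp (measurable_const.sub measurable_id)
      · exact ((measurable_Kh_aux α h u r).sub
          ((measurable_Kker α).comp (measurable_id.mul_const r))).abs
    have hf_int : IntervalIntegrable (fun ξ : ℝ =>
        (1 - ξ) ^ (-α) * |Kh α h (ξ * r + u) u - Kker α (ξ * r)|) volume a 1 := by
      apply hG_int.mono_fun' (hf_meas.aestronglyMeasurable.restrict)
      filter_upwards [MeasureTheory.ae_restrict_mem measurableSet_uIoc] with ξ hξ
      have hξ' : ξ ∈ Set.Icc a 1 := by
        have h' := hξ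
        have : Set.uIoc a 1 = Set.Ioc a 1 := Set.uIoc_of_le hcase.le
        rw [this] at h'
        exact ⟨h'.1.le, h'.2⟩
      have h1ξ : 0 ≤ 1 - ξ := by linarith [hξ'.2]
      have : 0 ≤ (1 - ξ) ^ (-α) * |Kh α h (ξ * r + u) u - Kker α (ξ * r)| :=
        mul_nonneg (Real.rpow_nonneg h1ξ _) (abs_nonneg _)
      rw [Real.norm_eq_abs, abs_of_nonneg this]
      exact hptw ξ hξ'
    have hmono := intervalIntegral.integral_mono_on hcase.le hf_int hG_int hptw
    -- integral bounds
    have haa1 : 1 ≤ a ^ (α - 1) :=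
      Real.one_le_rpow_of_pos_of_le_one_of_nonpos ha0 hcase.le (by linarith)
    have hI1 : (∫ ξ in a..1, (1 - ξ) ^ (-α)) ≤ a ^ (α - 1) / (1 - α) := by
      have hcomp : (∫ ξ in a..1, (1 - ξ) ^ (-α))
          = ∫ x in (1 - 1 : ℝ)..(1 - a), x ^ (-α) :=
        intervalIntegral.integral_comp_sub_left (fun x : ℝ => x ^ (-α)) 1
      rw [hcomp, show (1:ℝ) - 1 = 0 by norm_num,
        integral_rpow (Or.inl (by linarith : (-1:ℝ) < -α)),
        Real.zero_rpow (by intro hcon; nlinarith), show -α + 1 = 1 - α by ring]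
      have h1a : (1 - a) ^ (1 - α) ≤ 1 :=
        Real.rpow_le_one (by linarith) (by linarith) (by linarith)
      rw [div_le_div_iff₀ (by linarith) (by linarith)]
      nlinarith
    have hI2 : (∫ ξ in a..1, ξ ^ (α - 2)) ≤ a ^ (α - 1) / (1 - α) := by
      rw [integral_rpow (Or.inr ⟨by intro hcon; nlinarith,
        Set.notMem_uIcc_of_lt ha0 one_pos⟩), Real.one_rpow,
        show α - 2 + 1 = α - 1 by ring]
      have heq : (1 - a ^ (α - 1)) / (α - 1) = (a ^ (α - 1) - 1) / (1 - α) := by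
        rw [div_eq_div_iff (by linarith) (by linarith)]; ring
      rw [heq]
      exact div_le_div_of_nonneg_right (by linarith) (by linarith)
    -- integral of G
    have hIG : (∫ ξ in a..1, G ξ)
        ≤ 4 * C1 * h * r ^ (α - 2) * (2 * (a ^ (α - 1) / (1 - α))) := by
      have hsplit : (∫ ξ in a..1, G ξ)
          = 4 * C1 * h * r ^ (α - 2) *
            ((∫ ξ in a..1, (1 - ξ) ^ (-α)) + ∫ ξ in a..1, ξ ^ (α - 2)) := by
        rw [hG]
        rw [intervalIntegral.integral_const_mul]
        rw [intervalIntegral.integral_add hint1 hint2]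
      rw [hsplit]
      apply mul_le_mul_of_nonneg_left ?_ (by positivity)
      linarith
    -- assemble
    have hArpow : 0 ≤ a ^ (α - 1) := Real.rpow_nonneg ha0.le _
    have hchain : e3 α h t u ≤ e3 α h t u := le_refl _
    have hrr : r ^ (1 - α) * r ^ (α - 2) = r⁻¹ := by
      rw [← Real.rpow_add hr0, show (1 - α) + (α - 2) = (-1 : ℝ) by ring,
        Real.rpow_neg_one]
    have haA : a ^ (α - 1) ≤ (h / r) ^ (α - 1) := by
      have h1 : 2 * (h / r) ≤ a := by
        rw [ha, show 2 * (h / r) = 2 * h / r by ring]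
        exact div_le_div_of_nonneg_right (by linarith) hr0.le
      have h2 : a ^ (α - 1) ≤ (2 * (h / r)) ^ (α - 1) :=
        Real.rpow_le_rpow_of_nonpos (by positivity) h1 (by linarith)
      have h3 : (2 * (h / r)) ^ (α - 1) = 2 ^ (α - 1) * (h / r) ^ (α - 1) :=
        Real.mul_rpow (by norm_num) hhr0.le
      have h4 : (2:ℝ) ^ (α - 1) ≤ 1 :=
        Real.rpow_le_one_of_one_le_of_nonpos one_le_two (by linarith)
      have h5 : 0 ≤ (h / r) ^ (α - 1) := Real.rpow_nonneg hhr0.le _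
      nlinarith
    have hha : (h / r) ^ α = (h / r) * (h / r) ^ (α - 1) := by
      have hx := Real.rpow_add hhr0 1 (α - 1)
      rw [show (1:ℝ) + (α - 1) = α by ring, Real.rpow_one] at hx
      exact hx
    have hrpownn : 0 ≤ r ^ (1 - α) := Real.rpow_nonneg hr0.le _
    have hfinal : r ^ (1 - α) * (4 * C1 * h * r ^ (α - 2) * (2 * (a ^ (α - 1) / (1 - α))))
        ≤ 32 / Real.Gamma α * (h / r) ^ α := by
      have hC1e : 8 * C1 / (1 - α) = 32 / Real.Gamma α := by
        have h1 : (1:ℝ) - α ≠ 0 := by intro hcon; nlinarith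
        have h2 : Real.Gamma α ≠ 0 := ne_of_gt hΓ
        rw [hC1]; field_simp; ring
      have step : r ^ (1 - α) * (4 * C1 * h * r ^ (α - 2) * (2 * (a ^ (α - 1) / (1 - α))))
          = (8 * C1 / (1 - α)) * ((h * (r ^ (1 - α) * r ^ (α - 2))) * a ^ (α - 1)) := by
        ring
      rw [step, hrr, hC1e, ← div_eq_mul_inv, hha]
      apply mul_le_mul_of_nonneg_left ?_ (by positivity)
      exact mul_le_mul_of_nonneg_left haA hhr0.le
    have hminval : min ((h / r) ^ α) 1 = (h / r) ^ α :=
      min_eq_left (Real.rpow_le_one hhr0.le hhr.le (by linarith))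
    rw [hminval]
    calc r ^ (1 - α) * ∫ ξ in a..1,
          (1 - ξ) ^ (-α) * |Kh α h (ξ * r + u) u - Kker α (ξ * r)|
        ≤ r ^ (1 - α) * ∫ ξ in a..1, G ξ :=
          mul_le_mul_of_nonneg_left hmono hrpownn
      _ ≤ r ^ (1 - α) * (4 * C1 * h * r ^ (α - 2) * (2 * (a ^ (α - 1) / (1 - α)))) :=
          mul_le_mul_of_nonneg_left hIG hrpownn
      _ ≤ 32 / Real.Gamma α * (h / r) ^ α := hfinal
      _ ≤ (32 / Real.Gamma α + 1) * (h / r) ^ α := by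
          apply mul_le_mul_of_nonneg_right (by linarith) (Real.rpow_nonneg hhr0.le _)
end

section
/- Let α ∈ (1/2,1) and T > 0. There exists a constant C > 0 (depending only on α and T) such that for all t ∈ [0,T] and all 0 < h ≤ 1, h² ∫_0^t K(h−χ_h(u))² · min((t−u)^(−α), h^(−α))² du ≤ C h. -/
open MeasureTheory intervalIntegral Real

/-- Summable weight sequence used in the proof. -/
noncomputable def wseq (α : ℝ) (j : ℕ) : ℝ := if j ≤ 1 then (1:ℝ) else ((j:ℝ) - 1) ^ (-(2*α))

lemma wseq_nonneg (α : ℝ) (j : ℕ) : 0 ≤ wseq α j := by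
  unfold wseq; split
  · norm_num
  · rename_i hj
    have h2 : (2:ℝ) ≤ (j:ℝ) := by exact_mod_cast (by omega : 2 ≤ j)
    apply Real.rpow_nonneg; linarith

lemma wseq_summable {α : ℝ} (hα : 1/2 < α) : Summable (wseq α) := by
  apply (summable_nat_add_iff 2).mp
  have h1 : Summable (fun n : ℕ => ((n:ℝ)) ^ (-(2*α))) := by
    rw [Real.summable_nat_rpow]; linarith
  have h2 := (summable_nat_add_iff 1).mpr h1
  refine h2.congr fun n => ?_
  unfold wseq
  rw [if_neg (by omega)]
  push_cast
  ring_nf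

/-- `h² ∫_0^t K(h−χ_h(u))² min((t−u)^(−α), h^(−α))² du ≤ C h`. -/
theorem kernel_chi_integral_L2_bound (α T : ℝ) (hα : α ∈ Set.Ioo (1/2 : ℝ) 1) (hT : 0 < T) :
    ∃ C > 0, ∀ t h : ℝ, 0 ≤ t → t ≤ T → 0 < h → h ≤ 1 →
      h ^ 2 * (∫ u in (0:ℝ)..t,
          (Kker α (h - chi h u)) ^ 2 * (min ((t - u) ^ (-α)) (h ^ (-α))) ^ 2)
        ≤ C * h := by
  obtain ⟨hα1, hα2⟩ := hα
  have hΓ : 0 < Real.Gamma α := Real.Gamma_pos_of_pos (by linarith)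
  have hc2 : 0 < (Real.Gamma α) ^ 2 := by positivity
  have h2α1 : 0 < 2*α - 1 := by linarith
  set w : ℕ → ℝ := wseq α with hw
  have hwsum : Summable w := wseq_summable hα1
  have hwnn : ∀ j, 0 ≤ w j := wseq_nonneg α
  set S : ℝ := ∑' j, w j with hSdef
  have hS1 : 1 ≤ S := by
    have h0 : w 0 = 1 := by unfold w; unfold wseq; norm_num
    have := Summable.le_tsum hwsum 0 (fun j _ => hwnn j)
    rw [h0] at this; exact this
  refine ⟨S / ((Real.Gamma α) ^ 2 * (2*α - 1)), by positivity, ?_⟩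
  intro t h ht hTt hh hh1
  set G : ℝ → ℝ := fun u =>
    (Kker α (h - chi h u)) ^ 2 * (min ((t - u) ^ (-α)) (h ^ (-α))) ^ 2 with hG
  have hGnn : ∀ u, 0 ≤ G u := fun u => by positivity
  have hGm : Measurable G := by
    unfold G; unfold Kker chi phi
    have hfl : Measurable (fun u : ℝ => ((⌊u / h⌋ : ℤ) : ℝ)) :=
      measurable_from_top.comp ((measurable_id.div_const h).floor)
    have harg : Measurable (fun u : ℝ => h - (u - h * ((⌊u / h⌋ : ℤ) : ℝ))) :=
      measurable_const.sub (measurable_id.sub (measurable_const.mul hfl))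
    apply Measurable.mul
    · apply Measurable.pow _ measurable_const
      apply Measurable.ite
      · exact measurableSet_lt measurable_const harg
      · exact (by fun_prop : Measurable fun x : ℝ => x ^ (α - 1) / Real.Gamma α).comp harg
      · fun_prop
    · fun_prop
  -- grid setup
  set N : ℕ := (⌊t / h⌋).toNat with hN
  have hfl0 : (0:ℤ) ≤ ⌊t/h⌋ := Int.floor_nonneg.mpr (div_nonneg ht hh.le)
  have hNcast : ((N:ℝ)) = ((⌊t/h⌋ : ℤ) : ℝ) := by
    rw [hN]; exact_mod_cast congrArg (fun z : ℤ => (z:ℝ)) (Int.toNat_of_nonneg hfl0)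
  have hNle : (N:ℝ) * h ≤ t := by
    have h1 : ((⌊t/h⌋ : ℤ) : ℝ) ≤ t / h := Int.floor_le _
    rw [hNcast]
    exact (le_div_iff₀ hh).mp h1
  have hlt : t < ((N:ℝ) + 1) * h := by
    have h1 : t / h < ((⌊t/h⌋ : ℤ) : ℝ) + 1 := Int.lt_floor_add_one _
    rw [hNcast] at *
    exact (div_lt_iff₀ hh).mp h1
  set a : ℕ → ℝ := fun k => min ((k:ℝ)*h) t with ha
  have hak : ∀ k : ℕ, k ≤ N → a k = (k:ℝ)*h := by
    intro k hk
    apply min_eq_left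
    calc (k:ℝ)*h ≤ (N:ℝ)*h := by
          apply mul_le_mul_of_nonneg_right _ hh.le
          exact_mod_cast hk
      _ ≤ t := hNle
  have ha0 : a 0 = 0 := by
    have := hak 0 (Nat.zero_le _); simpa using this
  have haN : a (N+1) = t := by
    apply min_eq_right
    push_cast
    linarith
  have hmono : ∀ k : ℕ, a k ≤ a (k+1) := by
    intro k
    apply min_le_min _ le_rfl
    apply mul_le_mul_of_nonneg_right _ hh.le
    push_cast; linarith
  have hatop : ∀ k : ℕ, a (k+1) ≤ ((k:ℝ)+1)*h := by
    intro k
    have : a (k+1) ≤ ((k+1:ℕ):ℝ)*h := min_le_left _ _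
    push_cast at this; linarith
  have hat : ∀ k : ℕ, a (k+1) ≤ t := fun k => min_le_right _ _
  -- pointwise bound on cell k
  have hptwise : ∀ k : ℕ, k ≤ N → ∀ u : ℝ, (k:ℝ)*h ≤ u → u < ((k:ℝ)+1)*h → u ≤ t →
      G u ≤ (h ^ (-(2*α)) * w (N - k) / (Real.Gamma α)^2) * ((((k:ℝ)+1)*h - u) ^ (2*α-2)) := by
    intro k hk u hu1 hu2 hu3
    have hx : 0 < ((k:ℝ)+1)*h - u := by linarith
    have hfloor : ⌊u/h⌋ = (k:ℤ) := by
      rw [Int.floor_eq_iff]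
      constructor
      · rw [le_div_iff₀ hh]; push_cast; linarith
      · rw [div_lt_iff₀ hh]; push_cast; linarith
    have hchi : h - chi h u = ((k:ℝ)+1)*h - u := by
      unfold chi phi; rw [hfloor]; push_cast; ring
    have hK : (Kker α (h - chi h u))^2 = ((((k:ℝ)+1)*h - u) ^ (2*α-2)) / (Real.Gamma α)^2 := by
      rw [hchi]; unfold Kker; rw [if_pos hx, div_pow]
      congr 1
      rw [← Real.rpow_natCast ((((k:ℝ)+1)*h - u) ^ (α-1)) 2, ← Real.rpow_mul hx.le]
      norm_num
      ring_nf
    have hmin0 : 0 ≤ min ((t-u)^(-α)) (h^(-α)) :=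
      le_min (Real.rpow_nonneg (by linarith) _) (Real.rpow_nonneg hh.le _)
    have hminb : (min ((t-u)^(-α)) (h^(-α)))^2 ≤ h^(-(2*α)) * w (N-k) := by
      by_cases hcase : N ≤ k + 1
      · have hw1 : w (N-k) = 1 := by unfold w; unfold wseq; rw [if_pos (by omega)]
        rw [hw1, mul_one]
        calc (min ((t-u)^(-α)) (h^(-α)))^2 ≤ (h^(-α))^2 :=
              pow_le_pow_left₀ hmin0 (min_le_right _ _) 2
          _ = h^(-(2*α)) := by
              rw [← Real.rpow_natCast (h^(-α)) 2, ← Real.rpow_mul hh.le]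
              norm_num; ring_nf
      · have hj : k + 2 ≤ N := by omega
        have hwv : w (N-k) = (((N-k:ℕ):ℝ) - 1) ^ (-(2*α)) := by
          unfold w; unfold wseq; rw [if_neg (by omega)]
        have hcastNk : ((N-k:ℕ):ℝ) = (N:ℝ) - (k:ℝ) := by
          rw [Nat.cast_sub (by omega)]
        have hNk2 : (2:ℝ) ≤ (N:ℝ) - (k:ℝ) := by
          have : ((k+2:ℕ):ℝ) ≤ (N:ℝ) := by exact_mod_cast hj
          push_cast at this; linarith
        have hd : 0 < ((N:ℝ) - (k:ℝ) - 1) * h := by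
          apply mul_pos _ hh; linarith
        have htu : ((N:ℝ) - (k:ℝ) - 1)*h ≤ t - u := by nlinarith
        calc (min ((t-u)^(-α)) (h^(-α)))^2 ≤ ((t-u)^(-α))^2 :=
              pow_le_pow_left₀ hmin0 (min_le_left _ _) 2
          _ = (t-u)^(-(2*α)) := by
              rw [← Real.rpow_natCast ((t-u)^(-α)) 2, ← Real.rpow_mul (by linarith : (0:ℝ) ≤ t-u)]
              norm_num; ring_nf
          _ ≤ (((N:ℝ) - (k:ℝ) - 1)*h)^(-(2*α)) :=
              Real.rpow_le_rpow_of_nonpos hd htu (by linarith)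
          _ = ((N:ℝ) - (k:ℝ) - 1)^(-(2*α)) * h^(-(2*α)) :=
              Real.mul_rpow (by linarith) hh.le
          _ = h^(-(2*α)) * w (N-k) := by
              rw [hwv, hcastNk]; ring
    have hxpow : (0:ℝ) ≤ (((k:ℝ)+1)*h - u) ^ (2*α-2) := Real.rpow_nonneg hx.le _
    calc G u = ((((k:ℝ)+1)*h - u) ^ (2*α-2)) / (Real.Gamma α)^2
            * (min ((t-u)^(-α)) (h^(-α)))^2 := by simp only [hG]; rw [hK]
      _ ≤ ((((k:ℝ)+1)*h - u) ^ (2*α-2)) / (Real.Gamma α)^2 * (h^(-(2*α)) * w (N-k)) := by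
          apply mul_le_mul_of_nonneg_left hminb (by positivity)
      _ = (h ^ (-(2*α)) * w (N - k) / (Real.Gamma α)^2) * ((((k:ℝ)+1)*h - u) ^ (2*α-2)) := by
          ring
  -- dominating function integrable
  have hD : ∀ k : ℕ, IntervalIntegrable
      (fun u => (h ^ (-(2*α)) * w (N - k) / (Real.Gamma α)^2) * ((((k:ℝ)+1)*h - u) ^ (2*α-2)))
      volume (a k) (a (k+1)) := by
    intro k
    apply IntervalIntegrable.const_mul
    have := (intervalIntegral.intervalIntegrable_rpow' (by linarith : (-1:ℝ) < 2*α-2)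
      (a := ((k:ℝ)+1)*h - a k) (b := ((k:ℝ)+1)*h - a (k+1))).comp_sub_left (((k:ℝ)+1)*h)
    simpa using this
  -- ae non-endpoint
  have hne : ∀ c : ℝ, ∀ᵐ u : ℝ, u ≠ c := by
    intro c
    refine ae_iff.mpr ?_
    simpa [Set.setOf_eq_eq_singleton] using measure_singleton c
  -- integrability of G on each cell
  have hint : ∀ k : ℕ, k ≤ N → IntervalIntegrable G volume (a k) (a (k+1)) := by
    intro k hk
    apply (hD k).mono_fun hGm.aestronglyMeasurable
    have h1 : ∀ᵐ u ∂(volume.restrict (Set.uIoc (a k) (a (k+1)))), u ≠ ((k:ℝ)+1)*h :=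
      ae_restrict_of_ae (hne _)
    have h2 : ∀ᵐ u ∂(volume.restrict (Set.uIoc (a k) (a (k+1)))),
        u ∈ Set.uIoc (a k) (a (k+1)) := ae_restrict_mem measurableSet_uIoc
    filter_upwards [h1, h2] with u hu1 hu2
    rw [Set.uIoc_of_le (hmono k)] at hu2
    obtain ⟨hul, hur⟩ := hu2
    have hu1' : (k:ℝ)*h ≤ u := by rw [hak k hk] at hul; linarith
    have hu2' : u < ((k:ℝ)+1)*h := lt_of_le_of_ne (le_trans hur (hatop k)) hu1
    have hu3' : u ≤ t := le_trans hur (hat k)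
    have hb := hptwise k hk u hu1' hu2' hu3'
    have hDnn : 0 ≤ (h ^ (-(2*α)) * w (N - k) / (Real.Gamma α)^2)
        * ((((k:ℝ)+1)*h - u) ^ (2*α-2)) := by
      apply mul_nonneg _ (Real.rpow_nonneg (by linarith) _)
      have := hwnn (N-k)
      positivity
    rw [Real.norm_eq_abs, Real.norm_eq_abs, abs_of_nonneg (hGnn u), abs_of_nonneg hDnn]
    exact hb
  -- cell integral bound
  have hcell : ∀ k : ℕ, k ≤ N → (∫ u in (a k)..(a (k+1)), G u)
      ≤ w (N - k) * (h ^ (-(2*α)) * (h ^ (2*α-1)) / ((Real.Gamma α)^2 * (2*α-1))) := by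
    intro k hk
    have step1 : (∫ u in (a k)..(a (k+1)), G u)
        ≤ ∫ u in (a k)..(a (k+1)),
            (h ^ (-(2*α)) * w (N - k) / (Real.Gamma α)^2) * ((((k:ℝ)+1)*h - u) ^ (2*α-2)) := by
      apply intervalIntegral.integral_mono_ae_restrict (hmono k) (hint k hk) (hD k)
      have h1 : ∀ᵐ u ∂(volume.restrict (Set.Icc (a k) (a (k+1)))), u ≠ ((k:ℝ)+1)*h :=
        ae_restrict_of_ae (hne _)
      have h2 : ∀ᵐ u ∂(volume.restrict (Set.Icc (a k) (a (k+1)))),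
          u ∈ Set.Icc (a k) (a (k+1)) := ae_restrict_mem measurableSet_Icc
      filter_upwards [h1, h2] with u hu1 hu2
      obtain ⟨hul, hur⟩ := hu2
      have hu1' : (k:ℝ)*h ≤ u := by rw [hak k hk] at hul; linarith
      have hu2' : u < ((k:ℝ)+1)*h := lt_of_le_of_ne (le_trans hur (hatop k)) hu1
      exact hptwise k hk u hu1' hu2' (le_trans hur (hat k))
    have step2 : (∫ u in (a k)..(a (k+1)),
          (h ^ (-(2*α)) * w (N - k) / (Real.Gamma α)^2) * ((((k:ℝ)+1)*h - u) ^ (2*α-2)))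
        = (h ^ (-(2*α)) * w (N - k) / (Real.Gamma α)^2)
          * ∫ u in (a k)..(a (k+1)), ((((k:ℝ)+1)*h - u) ^ (2*α-2)) :=
      intervalIntegral.integral_const_mul _ _
    have step3 : (∫ u in (a k)..(a (k+1)), ((((k:ℝ)+1)*h - u) ^ (2*α-2)))
        ≤ h ^ (2*α-1) / (2*α-1) := by
      have hcs := intervalIntegral.integral_comp_sub_left (a := a k) (b := a (k+1))
        (fun x : ℝ => x ^ (2*α-2)) (((k:ℝ)+1)*h)
      rw [hcs, integral_rpow (Or.inl (by linarith : (-1:ℝ) < 2*α-2))]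
      have e1 : ((k:ℝ)+1)*h - a k = h := by rw [hak k hk]; ring
      have e2 : (0:ℝ) ≤ ((k:ℝ)+1)*h - a (k+1) := by
        have := hatop k; linarith
      have e3 : (2*α-2+1) = 2*α-1 := by ring
      rw [e1, e3]
      have e4 : (0:ℝ) ≤ (((k:ℝ)+1)*h - a (k+1)) ^ (2*α-1) := Real.rpow_nonneg e2 _
      have e5 := sub_le_self (h ^ (2*α-1)) e4
      exact (div_le_div_iff_of_pos_right h2α1).mpr e5
    calc (∫ u in (a k)..(a (k+1)), G u)
        ≤ (h ^ (-(2*α)) * w (N - k) / (Real.Gamma α)^2)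
          * ∫ u in (a k)..(a (k+1)), ((((k:ℝ)+1)*h - u) ^ (2*α-2)) := by
          rw [← step2]; exact step1
      _ ≤ (h ^ (-(2*α)) * w (N - k) / (Real.Gamma α)^2) * (h ^ (2*α-1) / (2*α-1)) := by
          apply mul_le_mul_of_nonneg_left step3
          have := hwnn (N-k); positivity
      _ = w (N - k) * (h ^ (-(2*α)) * (h ^ (2*α-1)) / ((Real.Gamma α)^2 * (2*α-1))) := by
          have hΓ0 : Real.Gamma α ≠ 0 := ne_of_gt hΓ
          have hc0 : 2*α-1 ≠ 0 := ne_of_gt h2α1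
          field_simp
  -- sum over cells
  have hsplit : (∫ u in (0:ℝ)..t, G u)
      = ∑ k ∈ Finset.range (N+1), ∫ u in (a k)..(a (k+1)), G u := by
    rw [intervalIntegral.sum_integral_adjacent_intervals (fun k hk => hint k (by omega))]
    rw [ha0, haN]
  have hsum : ∑ k ∈ Finset.range (N+1), w (N - k) ≤ S := by
    have hrefl : ∑ k ∈ Finset.range (N+1), w (N - k)
        = ∑ k ∈ Finset.range (N+1), w k := by
      rw [← Finset.sum_range_reflect w (N+1)]
      apply Finset.sum_congr rfl
      intro k hk
      congr 1 <;> omega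
    rw [hrefl]
    exact Summable.sum_le_tsum (Finset.range (N+1)) (fun i _ => hwnn i) hwsum
  have hpow : h ^ (-(2*α)) * h ^ (2*α-1) = h⁻¹ := by
    rw [← Real.rpow_add hh]
    have e : (-(2*α) + (2*α-1)) = (-1:ℝ) := by ring
    rw [e]
    exact Real.rpow_neg_one h
  calc h ^ 2 * (∫ u in (0:ℝ)..t, G u)
      = h ^ 2 * ∑ k ∈ Finset.range (N+1), ∫ u in (a k)..(a (k+1)), G u := by rw [hsplit]
    _ ≤ h ^ 2 * ∑ k ∈ Finset.range (N+1),
          w (N - k) * (h ^ (-(2*α)) * (h ^ (2*α-1)) / ((Real.Gamma α)^2 * (2*α-1))) := by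
        apply mul_le_mul_of_nonneg_left _ (by positivity)
        apply Finset.sum_le_sum
        intro k hk
        exact hcell k (Nat.lt_succ_iff.mp (Finset.mem_range.mp hk))
    _ = h ^ 2 * ((∑ k ∈ Finset.range (N+1), w (N - k))
          * (h ^ (-(2*α)) * (h ^ (2*α-1)) / ((Real.Gamma α)^2 * (2*α-1)))) := by
        rw [← Finset.sum_mul]
    _ ≤ h ^ 2 * (S * (h ^ (-(2*α)) * (h ^ (2*α-1)) / ((Real.Gamma α)^2 * (2*α-1)))) := by
        apply mul_le_mul_of_nonneg_left _ (by positivity)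
        apply mul_le_mul_of_nonneg_right hsum
        positivity
    _ = S / ((Real.Gamma α) ^ 2 * (2*α - 1)) * h := by
        rw [hpow]
        have hne0 : h ≠ 0 := ne_of_gt hh
        field_simp
end
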